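/- For every n ≥ 3, every q ∈ ℂ with q ≠ 0, and every 1 ≤ i ≤ n − 2, the operators on V (the span of basis vectors indexed by involutions in ISₙ) satisfy the braid relation T_i T_{i+1} T_i = T_{i+1} T_i T_{i+1} in End_ℂ(V). -/

import Mathlib

/-
`T_i I_w` depends only on the status of `w` at the points `a = i`, `b = i+1` (outside
`dom w`, fixed, or moved) and on the conjugate `s w s` by `s = (a b)`. Writing the same rule
for any two distinct points, the braid relation for distinct `a, b, c` is checked on basis
vectors, splitting on the status of `w` at `a`, `b`, `c`. Conjugation is an action of `Sₙ`, so
the conjugates are governed by `(a b)² = (b c)² = 1` and `(b c)(a b)(b c) = (a b)(b c)(a b)`,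
while `(π w π⁻¹)(π x) = π (w x)` gives their status; each of the 27 cases is then a linear
identity between basis vectors.
-/

open Equiv

/-- The symmetric inverse semigroup `ISₙ`: partial injective maps of `{0, …, n−1}`
(modelled as partial equivalences `Fin n ≃. Fin n`), under composition of partial
maps: `(x * y)(a) = x(y(a))`. -/
abbrev ISn (n : ℕ) : Type := PEquiv (Fin n) (Fin n)

noncomputable instance ISnMonoid (n : ℕ) : Monoid (ISn n) where
  one := PEquiv.refl (Fin n)
  mul x y := y.trans x
  mul_assoc x y z := (PEquiv.trans_assoc z y x).symm
  one_mul x := PEquiv.trans_refl x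
  mul_one x := PEquiv.refl_trans x

@[simp] theorem ISn.mul_def {n : ℕ} (x y : ISn n) : x * y = y.trans x := rfl
@[simp] theorem ISn.one_def {n : ℕ} : (1 : ISn n) = PEquiv.refl (Fin n) := rfl

/-- Involutions in `ISₙ`: elements mapping their domain bijectively to itself with
`w(w(a)) = a` for all `a` in the domain; equivalently, `w.symm = w`. -/
abbrev ISInv (n : ℕ) : Type := {w : ISn n // w.symm = w}

/-- `V`: the complex vector space with basis `{I_w : w an involution in ISₙ}`. -/
abbrev VIS (n : ℕ) : Type := ISInv n →₀ ℂ

/-- Conjugation `x w x⁻¹` of an involution `w ∈ ISₙ` by an element `x ∈ ISₙ`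
(as a partial map, `a ↦ x(w(x⁻¹(a)))`; when `dom(w) ⊆ dom(x)` this is the involution
with domain `x(dom(w))` sending `x(a) ↦ x(w(a))` for `a ∈ dom(w)`). -/
def conjIS {n : ℕ} (x : ISn n) (w : ISInv n) : ISInv n :=
  ⟨(x.symm.trans w.1).trans x, by
    rw [PEquiv.symm_trans_rev, PEquiv.symm_trans_rev, PEquiv.symm_symm, w.2,
      PEquiv.trans_assoc]⟩

/-- Conjugation `π w π⁻¹` of an involution `w ∈ ISₙ` by a permutation `π ∈ Sₙ`:
the involution with domain `π(dom(w))` sending `π(a) ↦ π(w(a))` for `a ∈ dom(w)`. -/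
def conjPermIS {n : ℕ} (π : Equiv.Perm (Fin n)) (w : ISInv n) : ISInv n :=
  conjIS π.toPEquiv w

/-- The operator `T_i` on `V`.  Indices are 0-based: the parameter `i` (with
`i + 1 < n`) corresponds to the pair of points `i, i+1` of `{0, …, n−1}` (that is,
to the 1-based index `i+1` of the paper), and `s_i` is the transposition swapping
them.  On a basis vector `I_w`:
if `i, i+1 ∈ dom(w)` then `T_i I_w` is `q I_w` if `i, i+1 ∉ supp(w)`; `−I_w` if
`i, i+1 ∈ supp(w)`; `I_{s_i w s_i}` if `i ∈ supp(w)`, `i+1 ∉ supp(w)`;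
`q I_{s_i w s_i} + (q−1) I_w` if `i ∉ supp(w)`, `i+1 ∈ supp(w)`.
If `i, i+1 ∉ dom(w)` then `T_i I_w = q I_w`.  If `i ∈ dom(w)`, `i+1 ∉ dom(w)` then
`T_i I_w = I_{s_i w s_i}`.  If `i ∉ dom(w)`, `i+1 ∈ dom(w)` then
`T_i I_w = q I_{s_i w s_i} + (q−1) I_w`. -/
noncomputable def TIS (n : ℕ) (q : ℂ) (i : ℕ) (hi : i + 1 < n) : VIS n →ₗ[ℂ] VIS n :=
  Finsupp.lift (VIS n) ℂ (ISInv n) (fun w =>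
    letI a : Fin n := ⟨i, Nat.lt_of_succ_lt hi⟩
    letI b : Fin n := ⟨i + 1, hi⟩
    letI s : Equiv.Perm (Fin n) := Equiv.swap a b
    if (w.1 a).isSome then
      if (w.1 b).isSome then
        -- both `i` and `i+1` lie in `dom(w)`
        if w.1 a = some a then
          if w.1 b = some b then q • Finsupp.single w (1 : ℂ)
          else q • Finsupp.single (conjPermIS s w) (1 : ℂ) +
            (q - 1) • Finsupp.single w (1 : ℂ)
        else
          if w.1 b = some b then Finsupp.single (conjPermIS s w) (1 : ℂ)
          else - Finsupp.single w (1 : ℂ)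
      else Finsupp.single (conjPermIS s w) (1 : ℂ)
    else
      if (w.1 b).isSome then
        q • Finsupp.single (conjPermIS s w) (1 : ℂ) + (q - 1) • Finsupp.single w (1 : ℂ)
      else q • Finsupp.single w (1 : ℂ))

/-- The operator `P_i` on `V`.  Indices are 0-based: the parameter `i` (with `i < n`)
corresponds to the 1-based index `i+1` of the paper, so that the paper's condition
`dom(w) ⊆ {i+1, …, n}` becomes: every `a ∈ dom(w)` satisfies `i < a`.
On a basis vector: `P_i I_w = I_w` if `dom(w) ⊆ {i+1, …, n}`, and `P_i I_w = 0`
otherwise. -/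
noncomputable def PIS (n : ℕ) (i : ℕ) : VIS n →ₗ[ℂ] VIS n :=
  Finsupp.lift (VIS n) ℂ (ISInv n) (fun w =>
    if ∀ a : Fin n, (w.1 a).isSome → i < (a : ℕ) then Finsupp.single w (1 : ℂ) else 0)

/-- The linear map `C_π : V → V` with `C_π(I_w) = I_{π w π⁻¹}`. -/
noncomputable def CIS (n : ℕ) (π : Equiv.Perm (Fin n)) : VIS n →ₗ[ℂ] VIS n :=
  Finsupp.lift (VIS n) ℂ (ISInv n) (fun w => Finsupp.single (conjPermIS π w) (1 : ℂ))

variable {n : ℕ}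

theorem Option.eq_none_or_eq_some_self_or_eq_some_ne {α : Type*} (o : Option α) (a : α) :
    o = none ∨ o = some a ∨ ∃ x, x ≠ a ∧ o = some x := by
  rcases o with _ | x
  · exact Or.inl rfl
  · rcases eq_or_ne x a with rfl | h
    · exact Or.inr (Or.inl rfl)
    · exact Or.inr (Or.inr ⟨x, h, rfl⟩)

theorem conjPermIS_apply (π : Equiv.Perm (Fin n)) (w : ISInv n) (x : Fin n) :
    (conjPermIS π w).1 x = (w.1 (π⁻¹ x)).map π := by
  change ((π.toPEquiv.symm x).bind w.1).bind π.toPEquiv = _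
  rw [← Equiv.toPEquiv_symm, Equiv.toPEquiv_apply]
  cases h : w.1 (π.symm x) <;> simp [h, Equiv.toPEquiv_apply]

theorem conjPermIS_mul (π ρ : Equiv.Perm (Fin n)) (w : ISInv n) :
    conjPermIS (π * ρ) w = conjPermIS π (conjPermIS ρ w) := by
  refine Subtype.ext (PEquiv.ext fun x => ?_)
  simp [conjPermIS_apply, mul_inv_rev, Option.map_map, Function.comp_def]

theorem conjPermIS_one (w : ISInv n) : conjPermIS 1 w = w :=
  Subtype.ext (PEquiv.ext fun x => by simp [conjPermIS_apply])

theorem conjPermIS_swap_swap (a b : Fin n) (w : ISInv n) :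
    conjPermIS (swap a b) (conjPermIS (swap a b) w) = w := by
  rw [← conjPermIS_mul, swap_mul_self, conjPermIS_one]

theorem conjPermIS_swap_braid {a b c : Fin n} (hab : a ≠ b) (hac : a ≠ c) (hbc : b ≠ c)
    (w : ISInv n) :
    conjPermIS (swap b c) (conjPermIS (swap a b) (conjPermIS (swap b c) w)) =
      conjPermIS (swap a b) (conjPermIS (swap b c) (conjPermIS (swap a b) w)) := by
  simp only [← conjPermIS_mul, ← mul_assoc]
  rw [swap_mul_swap_mul_swap hab hac, swap_comm a b, swap_comm b c,
    swap_mul_swap_mul_swap hbc.symm hac.symm, swap_comm a c]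

noncomputable def heckeImage (q : ℂ) (a b : Fin n) (w : ISInv n) : VIS n :=
  letI s : Equiv.Perm (Fin n) := swap a b
  if (w.1 a).isSome then
    if (w.1 b).isSome then
      if w.1 a = some a then
        if w.1 b = some b then q • Finsupp.single w (1 : ℂ)
        else q • Finsupp.single (conjPermIS s w) (1 : ℂ) +
          (q - 1) • Finsupp.single w (1 : ℂ)
      else
        if w.1 b = some b then Finsupp.single (conjPermIS s w) (1 : ℂ)
        else - Finsupp.single w (1 : ℂ)
    else Finsupp.single (conjPermIS s w) (1 : ℂ)
  else
    if (w.1 b).isSome then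
      q • Finsupp.single (conjPermIS s w) (1 : ℂ) + (q - 1) • Finsupp.single w (1 : ℂ)
    else q • Finsupp.single w (1 : ℂ)

noncomputable def heckeOp (q : ℂ) (a b : Fin n) : Module.End ℂ (VIS n) :=
  Finsupp.lift (VIS n) ℂ (ISInv n) (heckeImage q a b)

theorem TIS_eq_heckeOp (q : ℂ) (i : ℕ) (hi : i + 1 < n) :
    TIS n q i hi = heckeOp q ⟨i, by omega⟩ ⟨i + 1, hi⟩ :=
  rfl

theorem heckeOp_single (q : ℂ) (a b : Fin n) (w : ISInv n) (r : ℂ) :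
    heckeOp q a b (Finsupp.single w r) = r • heckeImage q a b w := by
  simp [heckeOp, Finsupp.lift_apply]

theorem heckeOp_braid (q : ℂ) {a b c : Fin n} (hab : a ≠ b) (hac : a ≠ c) (hbc : b ≠ c) :
    heckeOp q a b * heckeOp q b c * heckeOp q a b =
      heckeOp q b c * heckeOp q a b * heckeOp q b c := by
  ext w : 2
  have hs₁ : swap a b c = c := swap_apply_of_ne_of_ne hac.symm hbc.symm
  have hs₂ : swap b c a = a := swap_apply_of_ne_of_ne hab hac
  rcases (w.1 a).eq_none_or_eq_some_self_or_eq_some_ne a with ha | ha | ⟨x, hxa, ha⟩ <;>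
  rcases (w.1 b).eq_none_or_eq_some_self_or_eq_some_ne b with hb | hb | ⟨y, hyb, hb⟩ <;>
  rcases (w.1 c).eq_none_or_eq_some_self_or_eq_some_ne c with hc | hc | ⟨z, hzc, hc⟩ <;>
  · simp only [Module.End.mul_apply, LinearMap.coe_comp, Function.comp_apply,
      Finsupp.lsingle_apply, heckeOp_single, heckeImage, map_add, map_smul, map_neg,
      conjPermIS_apply, swap_inv, swap_apply_left, swap_apply_right,
      Option.map_some, Option.map_none, Option.isSome_some, Option.isSome_none,
      Option.some.injEq, Bool.false_eq_true, if_true, if_false, swap_apply_eq_iff,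
      conjPermIS_swap_swap, conjPermIS_swap_braid hab hac hbc, smul_add, smul_neg, smul_smul,
      one_smul, *]
    try module

/-- The braid relation `T_i T_{i+1} T_i = T_{i+1} T_i T_{i+1}` on `V`.  In the 0-based
indexing used here, the paper's condition `1 ≤ i ≤ n − 2` reads `i + 2 < n`. -/
theorem TIS_braid (n : ℕ) (q : ℂ) (i : ℕ) (hi : i + 2 < n) :
    (TIS n q i (by omega) : Module.End ℂ (VIS n)) * TIS n q (i + 1) hi * TIS n q i (by omega) =
      (TIS n q (i + 1) hi : Module.End ℂ (VIS n)) * TIS n q i (by omega) *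
        TIS n q (i + 1) hi := by
  simp only [TIS_eq_heckeOp]
  exact heckeOp_braid q (by grind) (by grind) (by grind)
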